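/- arXiv:1209.5071 — 2 statements merged into one kernel-verified Lean document; each statement's English description precedes it below -/
import Mathlib

section
/- Let C be a binary self-dual code of even length n (i.e., C = C^⊥ ⊆ 𝔽₂^n with respect to the standard bilinear form), and let h be the fixed point free involution on coordinates swapping 2i-1 and 2i for each i. Suppose h preserves C. Let C(h) be the subcode of codewords fixed by h and π : C(h) → 𝔽₂^{n/2} the map sending (c₁,c₁,c₂,c₂,…,c_{n/2},c_{n/2}) to (c₁,…,c_{n/2}). Then π(C(h)) is self-dual if and only if dim C(h) = n/4. -/
/-- The standard bilinear (dot product) form on `ι → ZMod 2`. -/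
def dotForm (ι : Type*) [Fintype ι] :
    LinearMap.BilinForm (ZMod 2) (ι → ZMod 2) :=
  LinearMap.mk₂ (ZMod 2) dotProduct
    add_dotProduct smul_dotProduct
    dotProduct_add dotProduct_smul

/-- A binary code is self-dual if it equals its dual with respect to the
standard bilinear form. -/
def IsSelfDualCode {ι : Type*} [Fintype ι]
    (C : Submodule (ZMod 2) (ι → ZMod 2)) : Prop :=
  C = (dotForm ι).orthogonal C

/-- The subspace of vectors fixed by the fixed point free involution `h` swapping
the two coordinates in each pair (coordinates are indexed by `Fin m × ZMod 2`,
and `h` sends `(i, j)` to `(i, j + 1)`). -/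
def fixedSub (m : ℕ) : Submodule (ZMod 2) (Fin m × ZMod 2 → ZMod 2) where
  carrier := {v | ∀ x : Fin m × ZMod 2, v (x.1, x.2 + 1) = v x}
  add_mem' := by
    intro a b ha hb x
    simp only [Pi.add_apply, ha x, hb x]
  zero_mem' := by intro x; simp
  smul_mem' := by
    intro c a ha x
    simp only [Pi.smul_apply, ha x]

/-- The projection `π` sending `(c₁,c₁,c₂,c₂,…)` to `(c₁,c₂,…)`. -/
def projMap (m : ℕ) : (Fin m × ZMod 2 → ZMod 2) →ₗ[ZMod 2] (Fin m → ZMod 2) :=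
  LinearMap.funLeft (ZMod 2) (ZMod 2) (fun i => (i, 0))

/-!
Let `dupMap` double every coordinate. It is injective with image the `h`-fixed words and `π` is
its left inverse, so `D := π(C(h)) = {w | dupMap w ∈ C}` has dimension `dim C(h)`. Since
`⟨c, dupMap w⟩ = ⟨φ c, w⟩` and `C = C^⊥`, we get `D = φ(C)^⊥`; and `dupMap (φ c) = c + h c ∈ C`
gives `φ(C) ⊆ D`. Hence `D^⊥ = φ(C) ⊆ D`, and `D = D^⊥` iff `dim D = m - dim D`.
-/

namespace LinearMap.BilinForm

variable {K V : Type*} [Field K] [AddCommGroup V] [Module K V] [FiniteDimensional K V]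
  {B : LinearMap.BilinForm K V}

theorem eq_orthogonal_iff_two_mul_finrank (hB : B.Nondegenerate) {D : Submodule K V}
    (hD : B.orthogonal D ≤ D) :
    D = B.orthogonal D ↔ 2 * Module.finrank K D = Module.finrank K V := by
  have hperp := finrank_orthogonal hB D
  have hle := Submodule.finrank_le D
  refine ⟨fun h => ?_, fun h => (Submodule.eq_of_le_of_finrank_eq hD ?_).symm⟩
  · rw [← h] at hperp
    omega
  · omega

end LinearMap.BilinForm

lemma dotForm_apply {ι : Type*} [Fintype ι] (u v : ι → ZMod 2) :
    dotForm ι u v = u ⬝ᵥ v := rfl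

lemma dotForm_isRefl (ι : Type*) [Fintype ι] : (dotForm ι).IsRefl := by
  intro u v h
  rwa [dotForm_apply, dotProduct_comm]

lemma dotForm_nondegenerate (ι : Type*) [Fintype ι] : (dotForm ι).Nondegenerate :=
  .ofSeparatingLeft fun _ hu => dotProduct_eq_zero _ hu

lemma mem_dotForm_orthogonal_iff {ι : Type*} [Fintype ι] {C : Submodule (ZMod 2) (ι → ZMod 2)}
    {v : ι → ZMod 2} : v ∈ (dotForm ι).orthogonal C ↔ ∀ c ∈ C, c ⬝ᵥ v = 0 :=
  Iff.rfl

section Pairs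

variable (m : ℕ)

/-- The map `φ` of the paper. -/
def pairSum : (Fin m × ZMod 2 → ZMod 2) →ₗ[ZMod 2] (Fin m → ZMod 2) where
  toFun c i := c (i, 0) + c (i, 1)
  map_add' a b := by funext i; simp only [Pi.add_apply]; ring
  map_smul' r a := by funext i; simp only [Pi.smul_apply, smul_eq_mul, RingHom.id_apply]; ring

def dupMap : (Fin m → ZMod 2) →ₗ[ZMod 2] (Fin m × ZMod 2 → ZMod 2) :=
  LinearMap.funLeft (ZMod 2) (ZMod 2) Prod.fst

variable {m}

lemma projMap_comp_dupMap : projMap m ∘ₗ dupMap m = LinearMap.id := rfl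

lemma dupMap_injective : Function.Injective (dupMap m) :=
  Function.LeftInverse.injective (g := projMap m) fun _ => rfl

lemma range_dupMap : LinearMap.range (dupMap m) = fixedSub m := by
  ext v
  refine ⟨?_, fun hv => ⟨projMap m v, funext fun ⟨i, j⟩ => ?_⟩⟩
  · rintro ⟨w, rfl⟩ x
    rfl
  · fin_cases j
    · rfl
    · exact (hv (i, 0)).symm

lemma map_projMap_inf_fixedSub (p : Submodule (ZMod 2) (Fin m × ZMod 2 → ZMod 2)) :
    (p ⊓ fixedSub m).map (projMap m) = p.comap (dupMap m) := by
  rw [← range_dupMap, inf_comm, ← Submodule.map_comap_eq, ← Submodule.map_comp,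
    projMap_comp_dupMap, Submodule.map_id]

lemma finrank_comap_dupMap (p : Submodule (ZMod 2) (Fin m × ZMod 2 → ZMod 2)) :
    Module.finrank (ZMod 2) (p.comap (dupMap m)) = Module.finrank (ZMod 2) ↥(p ⊓ fixedSub m) := by
  rw [← range_dupMap, inf_comm, ← Submodule.map_comap_eq]
  exact (Submodule.equivMapOfInjective _ dupMap_injective _).finrank_eq

lemma dotProduct_dupMap (c : Fin m × ZMod 2 → ZMod 2) (w : Fin m → ZMod 2) :
    c ⬝ᵥ dupMap m w = pairSum m c ⬝ᵥ w := by
  simp only [dotProduct, Fintype.sum_prod_type]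
  exact Finset.sum_congr rfl fun i _ => (Fin.sum_univ_two _).trans (add_mul _ _ _).symm

lemma map_pairSum_le_comap_dupMap {C : Submodule (ZMod 2) (Fin m × ZMod 2 → ZMod 2)}
    (hinv : ∀ c ∈ C, (fun x : Fin m × ZMod 2 => c (x.1, x.2 + 1)) ∈ C) :
    C.map (pairSum m) ≤ C.comap (dupMap m) := by
  rintro _ ⟨c, hc, rfl⟩
  -- `dupMap m (pairSum m c) = c + h c`
  show dupMap m (pairSum m c) ∈ C
  convert C.add_mem hc (hinv c hc) using 1
  funext ⟨i, j⟩
  fin_cases j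
  · rfl
  · exact add_comm _ _

lemma comap_dupMap_eq_orthogonal_map_pairSum {C : Submodule (ZMod 2) (Fin m × ZMod 2 → ZMod 2)}
    (hsd : IsSelfDualCode C) :
    C.comap (dupMap m) = (dotForm (Fin m)).orthogonal (C.map (pairSum m)) := by
  ext w
  conv_lhs => rw [Submodule.mem_comap, hsd, mem_dotForm_orthogonal_iff]
  simp only [mem_dotForm_orthogonal_iff, Submodule.mem_map, forall_exists_index, and_imp,
    forall_apply_eq_imp_iff₂, dotProduct_dupMap]

end Pairs

theorem proj_fixed_selfDual_iff_dim_general (m : ℕ)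
    (C : Submodule (ZMod 2) (Fin m × ZMod 2 → ZMod 2))
    (hsd : IsSelfDualCode C)
    (hinv : ∀ c ∈ C, (fun x : Fin m × ZMod 2 => c (x.1, x.2 + 1)) ∈ C) :
    IsSelfDualCode ((C ⊓ fixedSub m).map (projMap m)) ↔
      4 * Module.finrank (ZMod 2) ↥(C ⊓ fixedSub m) = 2 * m := by
  have hD := comap_dupMap_eq_orthogonal_map_pairSum hsd
  have hperp : (dotForm (Fin m)).orthogonal (C.comap (dupMap m)) ≤ C.comap (dupMap m) := by
    conv_lhs => rw [hD, LinearMap.BilinForm.orthogonal_orthogonal (dotForm_nondegenerate _)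
      (dotForm_isRefl _)]
    exact map_pairSum_le_comap_dupMap hinv
  rw [IsSelfDualCode, map_projMap_inf_fixedSub, ← finrank_comap_dupMap,
    LinearMap.BilinForm.eq_orthogonal_iff_two_mul_finrank (dotForm_nondegenerate _) hperp,
    Module.finrank_fin_fun]
  omega

/-- Let `C` be a binary self-dual code of even length `n = 2m`, invariant under the
fixed point free involution `h` swapping the coordinates in each of the `m` pairs.
Then `π(C(h))` is self-dual if and only if `dim C(h) = n / 4`. -/
theorem proj_fixed_selfDual_iff_dim (m : ℕ) (hm : 0 < m)
    (C : Submodule (ZMod 2) (Fin m × ZMod 2 → ZMod 2))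
    (hsd : IsSelfDualCode C)
    (hinv : ∀ c ∈ C, (fun x : Fin m × ZMod 2 => c (x.1, x.2 + 1)) ∈ C) :
    IsSelfDualCode ((C ⊓ fixedSub m).map (projMap m)) ↔
      4 * Module.finrank (ZMod 2) ↥(C ⊓ fixedSub m) = 2 * m :=
  proj_fixed_selfDual_iff_dim_general m C hsd hinv
end

section
/- Every binary self-dual [8,4] code with minimum distance at least 4 is equivalent (by a coordinate permutation) to the extended Hamming code of length 8. -/
/-- The extended Hamming code `Ĥ₃` of length 8 (as the first-order Reed–Muller
code `RM(1,3)`). -/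
def extHamming : Submodule (ZMod 2) (Fin 8 → ZMod 2) :=
  Submodule.span (ZMod 2)
    {![1,1,1,1,1,1,1,1], ![0,0,0,0,1,1,1,1], ![0,0,1,1,0,0,1,1], ![0,1,0,1,0,1,0,1]}

/-! A self-dual binary code contains the all-ones word `1`, since `c ⬝ᵥ 1 = c ⬝ᵥ c` for binary
words. Extend `1` to a basis `1, g₀, g₁, g₂` of `C`. If two coordinates `i ≠ j` agreed on
`g₀, g₁, g₂`, they would agree on all of `C`, so the weight-2 word `eᵢ + eⱼ` would lie in
`C⊥ = C`, contradicting minimum distance 4. Hence `i ↦ (g₀ i, g₁ i, g₂ i)` is a bijection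
`Fin 8 → 𝔽₂³`, and reordering the coordinates turns `g₀, g₁, g₂` into the three non-constant
rows of the generator matrix of `RM(1,3)`. -/

open Function Module Submodule

theorem exists_linearIndependent_cons_of_ne_zero {K V : Type*} [DivisionRing K]
    [AddCommGroup V] [Module K V] [FiniteDimensional K V] {x : V} (hx : x ≠ 0) :
    ∀ n < finrank K V, ∃ g : Fin n → V, LinearIndependent K (Fin.cons x g : Fin (n + 1) → V)
  | 0, _ => ⟨Fin.elim0, linearIndependent_finCons.mpr ⟨linearIndependent_empty_type, by simpa⟩⟩
  | n + 1, hn => by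
    obtain ⟨g, hg⟩ := exists_linearIndependent_cons_of_ne_zero (K := K) hx n (by omega)
    obtain ⟨y, hy⟩ := exists_linearIndependent_snoc_of_lt_finrank hg hn
    exact ⟨Fin.snoc g y, by rwa [Fin.cons_snoc_eq_snoc_cons]⟩

theorem Submodule.exists_span_range_cons_eq {K V : Type*} [DivisionRing K] [AddCommGroup V]
    [Module K V] (C : Submodule K V) [FiniteDimensional K C] {x : V} (hx : x ∈ C) (hx0 : x ≠ 0)
    {n : ℕ} (hn : finrank K C = n + 1) :
    ∃ g : Fin n → V, span K (Set.range (Fin.cons x g : Fin (n + 1) → V)) = C := by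
  obtain ⟨g, hg⟩ := exists_linearIndependent_cons_of_ne_zero (K := K) (x := (⟨x, hx⟩ : C))
    (by simpa using hx0) n (by omega)
  refine ⟨C.subtype ∘ g, ?_⟩
  have hspan := hg.span_eq_top_of_card_eq_finrank (by simp [hn])
  change span K (Set.range (Fin.cons (C.subtype ⟨x, hx⟩) (C.subtype ∘ g))) = C
  rw [← Fin.comp_cons, Set.range_comp, ← map_span, hspan, map_subtype_top]

theorem apply_eq_apply_of_mem_span {ι R : Type*} [Semiring R] {s : Set (ι → R)} {i j : ι}
    (hs : ∀ x ∈ s, x i = x j) {c : ι → R} (hc : c ∈ span R s) : c i = c j := by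
  have hle : span R s ≤ LinearMap.eqLocus (LinearMap.proj (R := R) (φ := fun _ => R) i)
      (LinearMap.proj j) :=
    span_le.mpr hs
  exact hle hc

theorem hammingNorm_single_add_single_le {ι R : Type*} [Fintype ι] [DecidableEq ι]
    [AddZeroClass R] [DecidableEq R] (i j : ι) (a b : R) :
    hammingNorm (Pi.single i a + Pi.single j b : ι → R) ≤ 2 := by
  have hsub : ({k | (Pi.single i a + Pi.single j b : ι → R) k ≠ 0} : Finset ι) ⊆ {i, j} := by
    intro k hk
    by_contra hkij
    simp only [Finset.mem_insert, Finset.mem_singleton, not_or] at hkij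
    simp [Pi.single_eq_of_ne hkij.1, Pi.single_eq_of_ne hkij.2] at hk
  exact (Finset.card_le_card hsub).trans Finset.card_le_two

namespace IsSelfDualCode

variable {ι : Type*} [Fintype ι] {C : Submodule (ZMod 2) (ι → ZMod 2)}

theorem mem_iff (hC : IsSelfDualCode C) {x : ι → ZMod 2} : x ∈ C ↔ ∀ c ∈ C, c ⬝ᵥ x = 0 := by
  conv_lhs => rw [hC]
  simp [dotForm, LinearMap.BilinForm.mem_orthogonal_iff]

theorem one_mem (hC : IsSelfDualCode C) : (1 : ι → ZMod 2) ∈ C := by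
  have hidem : ∀ a : ZMod 2, a * a = a := by decide
  refine hC.mem_iff.mpr fun c hc => ?_
  have hcc : c ⬝ᵥ c = 0 := hC.mem_iff.mp hc c hc
  simpa [dotProduct, hidem] using hcc

theorem exists_apply_ne (hC : IsSelfDualCode C)
    (hd : ∀ c ∈ C, c ≠ 0 → 3 ≤ hammingNorm c) {i j : ι} (hij : i ≠ j) :
    ∃ c ∈ C, c i ≠ c j := by
  classical
  by_contra! hagree
  have he : (Pi.single i 1 + Pi.single j 1 : ι → ZMod 2) ∈ C := hC.mem_iff.mpr fun c hc => by
    have hdouble : ∀ a : ZMod 2, a + a = 0 := by decide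
    simp [dotProduct_add, hagree c hc, hdouble]
  have he0 : (Pi.single i 1 + Pi.single j 1 : ι → ZMod 2) ≠ 0 := fun h => by
    simpa [Pi.single_eq_of_ne hij] using congrFun h i
  have := hd _ he he0
  have := hammingNorm_single_add_single_le i j (1 : ZMod 2) 1
  omega

end IsSelfDualCode

theorem exists_equiv_comp_eq {ι κ α β : Type*} {g : α → ι → β} {r : α → κ → β}
    (hg : Bijective fun i a => g a i) (hr : Bijective fun j a => r a j) :
    ∃ σ : κ ≃ ι, ∀ a, g a ∘ σ = r a :=
  ⟨(Equiv.ofBijective _ hr).trans (Equiv.ofBijective _ hg).symm, fun a => funext fun j =>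
    congrFun ((Equiv.ofBijective _ hg).apply_symm_apply ((fun j a => r a j) j)) a⟩

theorem map_funCongrLeft_span_range {ι κ α R : Type*} [Semiring R] (σ : κ ≃ ι)
    (f : α → ι → R) :
    (span R (Set.range f)).map (LinearEquiv.funCongrLeft R R σ).toLinearMap =
      span R (Set.range fun a => f a ∘ σ) := by
  rw [map_span, ← Set.range_comp]
  rfl

/-- The rows of the generator matrix of `RM(1,3)` other than the all-ones row; their columns
list `𝔽₂³` in binary order. -/
def extHammingRows : Fin 3 → Fin 8 → ZMod 2 :=
  ![![0,0,0,0,1,1,1,1], ![0,0,1,1,0,0,1,1], ![0,1,0,1,0,1,0,1]]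

theorem bijective_extHammingRows_columns : Bijective fun j k => extHammingRows k j := by
  decide

theorem extHamming_eq_span_range_cons :
    extHamming =
      span (ZMod 2) (Set.range (Fin.cons 1 extHammingRows : Fin 4 → Fin 8 → ZMod 2)) := by
  have hone : (1 : Fin 8 → ZMod 2) = ![1,1,1,1,1,1,1,1] := by decide
  simp only [extHamming, Fin.range_cons, extHammingRows, Matrix.range_cons, Matrix.range_empty,
    Set.union_empty, hone, Set.singleton_union]

/-- Every binary self-dual `[8,4]` code with minimum distance at least 4 is
equivalent, by a coordinate permutation, to the extended Hamming code of length 8. -/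
theorem selfDual_eight_four_four_unique (C : Submodule (ZMod 2) (Fin 8 → ZMod 2))
    (hsd : IsSelfDualCode C) (hrank : Module.finrank (ZMod 2) C = 4)
    (hd : ∀ c ∈ C, c ≠ 0 → 4 ≤ hammingNorm c) :
    ∃ σ : Equiv.Perm (Fin 8),
      C.map (LinearEquiv.funCongrLeft (ZMod 2) (ZMod 2) σ).toLinearMap = extHamming := by
  obtain ⟨g, hg⟩ := C.exists_span_range_cons_eq hsd.one_mem one_ne_zero hrank
  have hcols : Injective fun i k => g k i := by
    intro i j hij
    by_contra hne
    obtain ⟨c, hc, hcij⟩ :=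
      hsd.exists_apply_ne (fun c hc hc0 => (hd c hc hc0).trans' (by norm_num)) hne
    refine hcij (apply_eq_apply_of_mem_span ?_ (hg ▸ hc))
    rintro _ ⟨k, rfl⟩
    cases k using Fin.cases with
    | zero => rfl
    | succ k => exact congrFun hij k
  obtain ⟨σ, hσ⟩ := exists_equiv_comp_eq
    ((Fintype.bijective_iff_injective_and_card _).mpr ⟨hcols, by simp⟩)
    bijective_extHammingRows_columns
  refine ⟨σ, ?_⟩
  rw [← hg, map_funCongrLeft_span_range, extHamming_eq_span_range_cons]
  congr 2
  funext k
  cases k using Fin.cases with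
  | zero => rfl
  | succ k => exact hσ k
end
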